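/- arXiv:2404.10567 — 6 statements merged into one kernel-verified Lean document; each statement's English description precedes it below -/
import Mathlib

section
/- Let M be a matroid on [n] without loops, τ a basis of M, and x ↦ x^(τ) the τ-operator. Then the τ-operator is idempotent: (x^(τ))^(τ) = x^(τ) for all x ∈ ℝⁿ. -/
/-- The inner minimum of the τ-operator:
`x^(τ)_j = min { x_j, x_i : i ∉ τ such that (τ \ {j}) ∪ {i} is a basis }` for `j ∈ τ`. -/
noncomputable def tauMin {n : ℕ} (Bases : Finset (Fin n) → Prop) (τ : Finset (Fin n))
    (x : Fin n → ℝ) (j : Fin n) : ℝ :=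
  sInf (insert (x j) {v | ∃ i, i ∉ τ ∧ Bases (insert i (τ.erase j)) ∧ v = x i})

/-- The τ-operator of a matroid with basis predicate `Bases` and basis `τ`. -/
noncomputable def tauOp {n : ℕ} (Bases : Finset (Fin n) → Prop) (τ : Finset (Fin n))
    (x : Fin n → ℝ) (j : Fin n) : ℝ :=
  if j ∈ τ then tauMin Bases τ x j
  else sSup {v | ∃ j', j' ∈ τ ∧ Bases (insert j (τ.erase j')) ∧ v = tauMin Bases τ x j'}


/-- the τ-operator is idempotent: `(x^(τ))^(τ) = x^(τ)`. -/
theorem tauOp_idempotent {n : ℕ} (Bases : Finset (Fin n) → Prop) (τ : Finset (Fin n))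
    (hτ : Bases τ)
    (hexch : ∀ τ₁ τ₂, Bases τ₁ → Bases τ₂ → ∀ i₁ ∈ τ₁, i₁ ∉ τ₂ →
      ∃ i₂ ∈ τ₂, i₂ ∉ τ₁ ∧ Bases (insert i₂ (τ₁.erase i₁)))
    (hloopless : ∀ i ∉ τ, ∃ j ∈ τ, Bases (insert i (τ.erase j)))
    (x : Fin n → ℝ) :
    tauOp Bases τ (tauOp Bases τ x) = tauOp Bases τ x := by
  set y := tauOp Bases τ x with hy
  have hfin : ∀ (z : Fin n → ℝ) (j : Fin n),
      (insert (z j) {v | ∃ i, i ∉ τ ∧ Bases (insert i (τ.erase j)) ∧ v = z i}).Finite := by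
    intro z j
    exact Set.Finite.insert _ ((Set.finite_range z).subset
      (by rintro v ⟨i, _, _, rfl⟩; exact ⟨i, rfl⟩))
  have hfinT : ∀ (z : Fin n → ℝ) (i : Fin n),
      ({v | ∃ j', j' ∈ τ ∧ Bases (insert i (τ.erase j')) ∧ v = tauMin Bases τ z j'}).Finite := by
    intro z i
    exact (Set.finite_range (tauMin Bases τ z)).subset
      (by rintro v ⟨j', _, _, rfl⟩; exact ⟨j', rfl⟩)
  have hyj : ∀ j ∈ τ, y j = tauMin Bases τ x j := by
    intro j hj; simp [hy, tauOp, hj]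
  have hymin : ∀ j ∈ τ, tauMin Bases τ y j = y j := by
    intro j hj
    have hle : ∀ v ∈ insert (y j) {v | ∃ i, i ∉ τ ∧ Bases (insert i (τ.erase j)) ∧ v = y i},
        y j ≤ v := by
      rintro v (rfl | ⟨i, hiτ, hib, rfl⟩)
      · exact le_rfl
      · have hyi : y i = sSup {v | ∃ j', j' ∈ τ ∧ Bases (insert i (τ.erase j')) ∧
            v = tauMin Bases τ x j'} := by
          simp [hy, tauOp, hiτ]
        rw [hyi, hyj j hj]
        exact le_csSup ((hfinT x i).bddAbove) ⟨j, hj, hib, rfl⟩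
    unfold tauMin
    exact le_antisymm (csInf_le ((hfin y j).bddBelow) (Set.mem_insert _ _))
      (le_csInf ⟨_, Set.mem_insert _ _⟩ hle)
  have hmm : ∀ j' ∈ τ, tauMin Bases τ y j' = tauMin Bases τ x j' := by
    intro j' hj'; rw [hymin j' hj', hyj j' hj']
  funext j
  by_cases hj : j ∈ τ
  · simp only [tauOp, hj, if_true]
    exact hymin j hj
  · show tauOp Bases τ y j = y j
    have hyjj : y j = sSup {v | ∃ j', j' ∈ τ ∧ Bases (insert j (τ.erase j')) ∧
        v = tauMin Bases τ x j'} := by simp [hy, tauOp, hj]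
    simp only [tauOp, hj, if_false]
    rw [hyjj]
    congr 1
    ext v
    constructor
    · rintro ⟨j', hj', hb, rfl⟩
      exact ⟨j', hj', hb, hmm j' hj'⟩
    · rintro ⟨j', hj', hb, rfl⟩
      exact ⟨j', hj', hb, (hmm j' hj').symm⟩
end

section
/- Let B be an (n−k)×n matrix over the Puiseux series field K = ℂ{{t}} with entries of valuation ≥ 0, u ∈ Kⁿ generic with w = val(u), and B^h = [[B, 0],[uᵀ, −1]]. For a basis γ of M(B^h) not containing n+1, the valuation of det(B^h_γ) equals min{ w_i : i ∈ γ such that γ \ {i} is a basis of M(B) }, provided val(B_σ-minors) = 0 for all bases σ of M(B) and the minimum in the expansion is attained with no cancellation (genericity). For bases γ containing n+1, val(det(B^h_γ)) = 0. -/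
/-- Determinant of the square submatrix of `M` on the columns indexed by `γ` (in order). -/
noncomputable def colDet {K : Type*} [Field K] {p q : ℕ} (M : Matrix (Fin p) (Fin q) K)
    (γ : Finset (Fin q)) (h : γ.card = p) : K :=
  (M.submatrix id (fun r => ((γ.orderIsoOfFin h r : Fin q)))).det

/-- `γ` indexes a basis of the column matroid `M(B)`. -/
noncomputable def isColBasis {K : Type*} [Field K] {p q : ℕ} (B : Matrix (Fin p) (Fin q) K)
    (γ : Finset (Fin q)) : Prop :=
  ∃ h : γ.card = p, colDet B γ h ≠ 0

/-- The homogenization `B^h = [[B, 0], [uᵀ, -1]]` of `B` with respect to `u`. -/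
noncomputable def Bhom {K : Type*} [Field K] {m n : ℕ} (B : Matrix (Fin m) (Fin n) K)
    (u : Fin n → K) : Matrix (Fin (m + 1)) (Fin (n + 1)) K :=
  Matrix.of fun r c =>
    if hr : (r : ℕ) < m then
      if hc : (c : ℕ) < n then B ⟨r, hr⟩ ⟨c, hc⟩ else 0
    else
      if hc : (c : ℕ) < n then u ⟨c, hc⟩ else -1

/-- The embedding `[n] ↪ [n+1]`. -/
def embSucc (n : ℕ) : Fin n ↪ Fin (n + 1) := ⟨Fin.castSucc, Fin.castSucc_injective n⟩

section aux
variable {K : Type*} [Field K] {v : K → WithTop ℝ}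

lemma aux_vone (hv0 : ∀ x : K, v x = ⊤ ↔ x = 0)
    (hvmul : ∀ x y : K, v (x * y) = v x + v y) : v 1 = 0 := by
  have h := hvmul 1 1
  rw [one_mul] at h
  cases hv : v (1 : K) with
  | top => exact absurd ((hv0 1).mp hv) one_ne_zero
  | coe a =>
    rw [hv, ← WithTop.coe_add] at h
    have ha : a = a + a := by exact_mod_cast h
    have : a = 0 := by linarith
    exact_mod_cast this

lemma aux_vnegone (hv0 : ∀ x : K, v x = ⊤ ↔ x = 0)
    (hvmul : ∀ x y : K, v (x * y) = v x + v y) : v (-1) = 0 := by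
  have h := hvmul (-1) (-1)
  rw [neg_one_mul, neg_neg, aux_vone hv0 hvmul] at h
  cases hv : v (-1 : K) with
  | top => rw [hv] at h; simp at h
  | coe a =>
    rw [hv, ← WithTop.coe_add] at h
    have ha : (0 : ℝ) = a + a := by exact_mod_cast h
    have : a = 0 := by linarith
    exact_mod_cast this

lemma aux_vpow (hv0 : ∀ x : K, v x = ⊤ ↔ x = 0)
    (hvmul : ∀ x y : K, v (x * y) = v x + v y) (k : ℕ) : v ((-1 : K) ^ k) = 0 := by
  induction k with
  | zero => rw [pow_zero]; exact aux_vone hv0 hvmul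
  | succ k ih => rw [pow_succ, hvmul, ih, aux_vnegone hv0 hvmul, add_zero]

lemma aux_vadd_eq (hv0 : ∀ x : K, v x = ⊤ ↔ x = 0)
    (hvmul : ∀ x y : K, v (x * y) = v x + v y)
    (hvadd : ∀ x y : K, min (v x) (v y) ≤ v (x + y))
    {x y : K} (hxy : v x < v y) : v (x + y) = v x := by
  refine le_antisymm ?_ ?_
  · have h2 := hvadd (x + y) (-y)
    rw [add_neg_cancel_right] at h2
    have hvy : v (-y) = v y := by
      have hy := hvmul (-1) y
      rw [neg_one_mul] at hy
      rw [hy, aux_vnegone hv0 hvmul, zero_add]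
    rw [hvy] at h2
    rcases min_le_iff.mp h2 with h | h
    · exact h
    · exact absurd h (not_le.mpr hxy)
  · calc v x = min (v x) (v y) := (min_eq_left hxy.le).symm
      _ ≤ v (x + y) := hvadd x y

lemma aux_sum_lt (hv0 : ∀ x : K, v x = ⊤ ↔ x = 0)
    (hvadd : ∀ x y : K, min (v x) (v y) ≤ v (x + y))
    {ι : Type*} (s : Finset ι) (f : ι → K) (a : WithTop ℝ) (ha : a ≠ ⊤)
    (h : ∀ j ∈ s, a < v (f j)) : a < v (∑ j ∈ s, f j) := by
  classical
  induction s using Finset.induction with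
  | empty =>
    rw [Finset.sum_empty, (hv0 0).mpr rfl]
    exact lt_top_iff_ne_top.mpr ha
  | insert _ _ hj ih =>
    rw [Finset.sum_insert hj]
    have h1 := h _ (Finset.mem_insert_self _ _)
    have h2 := ih fun j hj' => h j (Finset.mem_insert_of_mem hj')
    exact lt_of_lt_of_le (lt_min h1 h2) (hvadd _ _)

lemma aux_vsum (hv0 : ∀ x : K, v x = ⊤ ↔ x = 0)
    (hvmul : ∀ x y : K, v (x * y) = v x + v y)
    (hvadd : ∀ x y : K, min (v x) (v y) ≤ v (x + y))
    {ι : Type*} [Fintype ι] (f : ι → K) (j₀ : ι) (hne : v (f j₀) ≠ ⊤)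
    (h : ∀ j, j ≠ j₀ → v (f j₀) < v (f j)) : v (∑ j, f j) = v (f j₀) := by
  classical
  rw [← Finset.add_sum_erase _ f (Finset.mem_univ j₀)]
  exact aux_vadd_eq hv0 hvmul hvadd
    (aux_sum_lt hv0 hvadd _ f _ hne fun j hj => h j (Finset.ne_of_mem_erase hj))

end aux

lemma map_orderEmbOfFin {n k : ℕ} (γ : Finset (Fin n)) (h' : γ.card = k)
    (h : (γ.map (embSucc n)).card = k) (j : Fin k) :
    (γ.map (embSucc n)).orderEmbOfFin h j = Fin.castSucc (γ.orderEmbOfFin h' j) := by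
  have huniq := Finset.orderEmbOfFin_unique h
    (f := fun j => Fin.castSucc (γ.orderEmbOfFin h' j))
    (fun x => Finset.mem_map_of_mem _ (Finset.orderEmbOfFin_mem γ h' x))
    (Fin.strictMono_castSucc.comp (γ.orderEmbOfFin h').strictMono)
  exact (congrFun huniq j).symm

lemma erase_orderEmbOfFin {n k : ℕ} (γ : Finset (Fin n)) (h' : γ.card = k + 1) (j : Fin (k + 1))
    (h'' : (γ.erase (γ.orderEmbOfFin h' j)).card = k) (c : Fin k) :
    (γ.erase (γ.orderEmbOfFin h' j)).orderEmbOfFin h'' c = γ.orderEmbOfFin h' (j.succAbove c) := by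
  have huniq := Finset.orderEmbOfFin_unique h''
    (f := fun c => γ.orderEmbOfFin h' (j.succAbove c))
    (fun c => Finset.mem_erase.mpr
      ⟨fun hc => (Fin.succAbove_ne j c) ((γ.orderEmbOfFin h').injective hc),
        Finset.orderEmbOfFin_mem γ h' _⟩)
    ((γ.orderEmbOfFin h').strictMono.comp (Fin.strictMono_succAbove j))
  exact (congrFun huniq c).symm

lemma insert_last_orderEmbOfFin {n k : ℕ} (σ : Finset (Fin n)) (h' : σ.card = k)
    (h : (insert (Fin.last n) (σ.map (embSucc n))).card = k + 1) (j : Fin (k + 1)) :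
    (insert (Fin.last n) (σ.map (embSucc n))).orderEmbOfFin h j =
      if hj : (j : ℕ) < k then Fin.castSucc (σ.orderEmbOfFin h' ⟨j, hj⟩) else Fin.last n := by
  have huniq := Finset.orderEmbOfFin_unique h
    (f := fun j : Fin (k + 1) =>
      if hj : (j : ℕ) < k then Fin.castSucc (σ.orderEmbOfFin h' ⟨j, hj⟩) else Fin.last n)
    (fun x => by
      split
      · exact Finset.mem_insert_of_mem (Finset.mem_map_of_mem _ (Finset.orderEmbOfFin_mem σ h' _))
      · exact Finset.mem_insert_self _ _)
    (fun a b hab => by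
      dsimp only
      rcases Nat.lt_or_ge (a : ℕ) k with ha | ha <;> rcases Nat.lt_or_ge (b : ℕ) k with hb | hb
      · rw [dif_pos ha, dif_pos hb]
        exact Fin.castSucc_lt_castSucc_iff.mpr ((σ.orderEmbOfFin h').strictMono hab)
      · rw [dif_pos ha, dif_neg (Nat.not_lt.mpr hb)]
        exact Fin.castSucc_lt_last _
      · exact absurd (Fin.lt_def.mp hab) (by omega)
      · have ha' := a.isLt
        have hb' := b.isLt
        exact absurd (Fin.lt_def.mp hab) (by omega))
  exact (congrFun huniq j).symm

lemma insert_last_orderEmbOfFin_castSucc {n k : ℕ} (σ : Finset (Fin n)) (h' : σ.card = k)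
    (h : (insert (Fin.last n) (σ.map (embSucc n))).card = k + 1) (c : Fin k) :
    (insert (Fin.last n) (σ.map (embSucc n))).orderEmbOfFin h (Fin.castSucc c) =
      Fin.castSucc (σ.orderEmbOfFin h' c) := by
  rw [insert_last_orderEmbOfFin σ h' h, dif_pos (by simpa using c.isLt)]
  exact congrArg _ (congrArg _ (Fin.ext (by simp)))

lemma insert_last_orderEmbOfFin_last {n k : ℕ} (σ : Finset (Fin n)) (h' : σ.card = k)
    (h : (insert (Fin.last n) (σ.map (embSucc n))).card = k + 1) :
    (insert (Fin.last n) (σ.map (embSucc n))).orderEmbOfFin h (Fin.last k) = Fin.last n := by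
  rw [insert_last_orderEmbOfFin σ h' h, dif_neg (by simp)]

/-- over a field `K` with additive (min-)valuation `v` (e.g. Puiseux series with
the `t`-adic valuation), if all nonzero maximal minors of `B` have valuation `0` and
`w = val(u)`, then for a basis `γ ⊆ [n]` of `M(B^h)` whose lowest-order Laplace term is unique
(genericity), `val(det B^h_γ) = min { w_i : i ∈ γ, γ \ {i} ∈ M(B) }`; and for any basis of
`M(B^h)` containing `n+1`, i.e. `σ ∪ {n+1}` with `σ ∈ M(B)`, the valuation is `0`. -/
theorem valuation_of_coextension_minors {K : Type*} [Field K] {m n : ℕ}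
    (v : K → WithTop ℝ)
    (hv0 : ∀ x : K, v x = ⊤ ↔ x = 0)
    (hvmul : ∀ x y : K, v (x * y) = v x + v y)
    (hvadd : ∀ x y : K, min (v x) (v y) ≤ v (x + y))
    (B : Matrix (Fin m) (Fin n) K) (u : Fin n → K) (w : Fin n → ℝ)
    (hB : ∀ (σ : Finset (Fin n)) (h : σ.card = m), colDet B σ h ≠ 0 → v (colDet B σ h) = 0)
    (hw : ∀ i, v (u i) = (w i : WithTop ℝ)) :
    (∀ (γ : Finset (Fin n)) (h : (γ.map (embSucc n)).card = m + 1),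
      (∃ i₀ ∈ γ, isColBasis B (γ.erase i₀) ∧
        ∀ i ∈ γ, isColBasis B (γ.erase i) → i ≠ i₀ → w i₀ < w i) →
      v (colDet (Bhom B u) (γ.map (embSucc n)) h) =
        ((sInf {r : ℝ | ∃ i ∈ γ, isColBasis B (γ.erase i) ∧ r = w i} : ℝ) : WithTop ℝ)) ∧
    (∀ (σ : Finset (Fin n)) (h : (insert (Fin.last n) (σ.map (embSucc n))).card = m + 1),
      isColBasis B σ →
      v (colDet (Bhom B u) (insert (Fin.last n) (σ.map (embSucc n))) h) = (0 : ℝ)) := by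
  classical
  have hBu : ∀ x : Fin n, Bhom B u (Fin.last m) (Fin.castSucc x) = u x := by
    intro x
    simp only [Bhom, Matrix.of_apply]
    rw [dif_neg (by simp), dif_pos (by simpa using x.isLt)]
    exact congrArg _ (Fin.ext (by simp))
  have hBB : ∀ (r : Fin m) (x : Fin n),
      Bhom B u (Fin.castSucc r) (Fin.castSucc x) = B r x := by
    intro r x
    simp only [Bhom, Matrix.of_apply]
    rw [dif_pos (by simpa using r.isLt), dif_pos (by simpa using x.isLt)]
    congr 1 <;> exact Fin.ext (by simp)
  have hB0 : ∀ r : Fin (m + 1), (r : ℕ) < m → Bhom B u r (Fin.last n) = 0 := by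
    intro r hr
    simp only [Bhom, Matrix.of_apply]
    rw [dif_pos hr, dif_neg (by simp)]
  have hBneg : Bhom B u (Fin.last m) (Fin.last n) = -1 := by
    simp only [Bhom, Matrix.of_apply]
    rw [dif_neg (by simp), dif_neg (by simp)]
  constructor
  · -- Part 1
    intro γ h hgen
    obtain ⟨i₀, hi₀γ, hb₀, hmin⟩ := hgen
    have h'γ : γ.card = m + 1 := by rwa [Finset.card_map] at h
    have hmem : ∀ j : Fin (m + 1), γ.orderEmbOfFin h'γ j ∈ γ :=
      fun j => Finset.orderEmbOfFin_mem γ h'γ j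
    have hcard : ∀ j : Fin (m + 1), (γ.erase (γ.orderEmbOfFin h'γ j)).card = m := by
      intro j
      rw [Finset.card_erase_of_mem (hmem j), h'γ]
      omega
    have hdet : colDet (Bhom B u) (γ.map (embSucc n)) h =
        ∑ j : Fin (m + 1), (-1 : K) ^ (m + (j : ℕ)) * u (γ.orderEmbOfFin h'γ j) *
          colDet B (γ.erase (γ.orderEmbOfFin h'γ j)) (hcard j) := by
      show Matrix.det _ = _
      rw [Matrix.det_succ_row _ (Fin.last m)]
      refine Finset.sum_congr rfl fun j _ => ?_
      congr 1
      · congr 1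
        rw [Matrix.submatrix_apply, id, Finset.coe_orderIsoOfFin_apply,
          map_orderEmbOfFin γ h'γ h j]
        exact hBu _
      · show Matrix.det _ = Matrix.det _
        congr 1
        ext r c
        simp only [Matrix.submatrix_apply, id, Fin.succAbove_last]
        rw [Finset.coe_orderIsoOfFin_apply, map_orderEmbOfFin γ h'γ h,
          Finset.coe_orderIsoOfFin_apply, erase_orderEmbOfFin γ h'γ j (hcard j) c]
        exact hBB r _
    obtain ⟨j₀, hj₀⟩ : ∃ j₀ : Fin (m + 1), γ.orderEmbOfFin h'γ j₀ = i₀ := by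
      obtain ⟨j₀, hj₀⟩ := (γ.orderIsoOfFin h'γ).surjective ⟨i₀, hi₀γ⟩
      exact ⟨j₀, by rw [← Finset.coe_orderIsoOfFin_apply, hj₀]⟩
    subst hj₀
    obtain ⟨hc₀, hd₀⟩ := hb₀
    have hd₀' : colDet B (γ.erase (γ.orderEmbOfFin h'γ j₀)) (hcard j₀) ≠ 0 := hd₀
    have hval : ∀ (j : Fin (m + 1)),
        colDet B (γ.erase (γ.orderEmbOfFin h'γ j)) (hcard j) ≠ 0 →
        v ((-1 : K) ^ (m + (j : ℕ)) * u (γ.orderEmbOfFin h'γ j) *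
          colDet B (γ.erase (γ.orderEmbOfFin h'γ j)) (hcard j)) =
          (w (γ.orderEmbOfFin h'γ j) : WithTop ℝ) := by
      intro j hne
      rw [hvmul, hvmul, aux_vpow hv0 hvmul, hw, hB _ (hcard j) hne, zero_add, add_zero]
    have hsum : v (∑ j : Fin (m + 1), (-1 : K) ^ (m + (j : ℕ)) * u (γ.orderEmbOfFin h'γ j) *
          colDet B (γ.erase (γ.orderEmbOfFin h'γ j)) (hcard j)) =
        (w (γ.orderEmbOfFin h'γ j₀) : WithTop ℝ) := by
      rw [aux_vsum hv0 hvmul hvadd _ j₀ ?_ ?_]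
      · exact hval j₀ hd₀'
      · rw [hval j₀ hd₀']
        exact WithTop.coe_ne_top
      · intro j hj
        rw [hval j₀ hd₀']
        by_cases hz : colDet B (γ.erase (γ.orderEmbOfFin h'γ j)) (hcard j) = 0
        · rw [hz, mul_zero, (hv0 0).mpr rfl]
          exact WithTop.coe_lt_top _
        · rw [hval j hz]
          exact_mod_cast hmin (γ.orderEmbOfFin h'γ j) (hmem j) ⟨hcard j, hz⟩
            (fun he => hj ((γ.orderEmbOfFin h'γ).injective he))
    have hinf : sInf {r : ℝ | ∃ i ∈ γ, isColBasis B (γ.erase i) ∧ r = w i} =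
        w (γ.orderEmbOfFin h'γ j₀) := by
      apply IsLeast.csInf_eq
      constructor
      · exact ⟨γ.orderEmbOfFin h'γ j₀, hmem j₀, ⟨hcard j₀, hd₀'⟩, rfl⟩
      · rintro r ⟨i, hiγ, hbi, rfl⟩
        rcases eq_or_ne i (γ.orderEmbOfFin h'γ j₀) with rfl | hne'
        · exact le_refl _
        · exact (hmin i hiγ hbi hne').le
    rw [hdet, hsum, hinf]
  · -- Part 2
    intro σ h hσ
    obtain ⟨h', hd⟩ := hσ
    have hdet : colDet (Bhom B u) (insert (Fin.last n) (σ.map (embSucc n))) h =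
        (-1 : K) ^ (m + m) * (-1) * colDet B σ h' := by
      show Matrix.det _ = _
      rw [Matrix.det_succ_column _ (Fin.last m)]
      rw [Finset.sum_eq_single (Fin.last m)]
      · congr 1
        · congr 1
          rw [Matrix.submatrix_apply, id, Finset.coe_orderIsoOfFin_apply,
            insert_last_orderEmbOfFin_last σ h' h]
          exact hBneg
        · show Matrix.det _ = Matrix.det _
          congr 1
          ext r c
          simp only [Matrix.submatrix_apply, id, Fin.succAbove_last]
          rw [Finset.coe_orderIsoOfFin_apply, insert_last_orderEmbOfFin_castSucc σ h' h,
            Finset.coe_orderIsoOfFin_apply]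
          exact hBB r _
      · intro i _ hi
        rw [Matrix.submatrix_apply, id, Finset.coe_orderIsoOfFin_apply,
          insert_last_orderEmbOfFin_last σ h' h, hB0 i (Fin.val_lt_last hi), mul_zero, zero_mul]
      · intro hne
        exact absurd (Finset.mem_univ _) hne
    rw [hdet, hvmul, hvmul, aux_vpow hv0 hvmul, aux_vnegone hv0 hvmul, hB σ h' hd]
    simp
end

section
/- Let A ∈ ℤ^{k×n} be full rank with (1,…,1) ∈ row(A), τ a basis of the matroid M(A) (i.e. det(A_τ) ≠ 0), and w^(τ) ∈ ℝⁿ any vector. The linear subspace row(A) ⊆ ℝⁿ intersects the affine cone C_τ = w^(τ) + pos(e_i : i ∈ [n]\τ) in at most one point, and this intersection is nonempty if and only if Aᵀ(A_τᵀ)^{-1} w^(τ)_τ ≥ w^(τ) entrywise; in that case the unique intersection point is q̂ = Aᵀ(A_τᵀ)^{-1} w^(τ)_τ. -/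
/-- The row span of a `k × n` matrix `A`, as a subset of `ℝⁿ`: all vectors `Aᵀy`. -/
def rowSpan {k n : ℕ} (A : Matrix (Fin k) (Fin n) ℝ) : Set (Fin n → ℝ) :=
  {x | ∃ y : Fin k → ℝ, x = fun j => ∑ i, y i * A i j}

/-- The `k × k` submatrix `A_τ` of `A` with columns indexed by `τ`. -/
noncomputable def Asub {k n : ℕ} (A : Matrix (Fin k) (Fin n) ℝ) (τ : Finset (Fin n))
    (h : τ.card = k) : Matrix (Fin k) (Fin k) ℝ :=
  A.submatrix id (fun r => ((τ.orderIsoOfFin h r : Fin n)))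

/-- The point `q̂ = Aᵀ (A_τᵀ)⁻¹ w_τ`. -/
noncomputable def qhat {k n : ℕ} (A : Matrix (Fin k) (Fin n) ℝ) (τ : Finset (Fin n))
    (h : τ.card = k) (w : Fin n → ℝ) : Fin n → ℝ :=
  fun j => ∑ r, A r j * ((Asub A τ h).transpose⁻¹.mulVec
    (fun s => w ((τ.orderIsoOfFin h s : Fin n)))) r

/-- The affine cone `C_τ = w + pos(e_i : i ∉ τ)`. -/
def coneC {n : ℕ} (τ : Finset (Fin n)) (w : Fin n → ℝ) : Set (Fin n → ℝ) :=
  {x | ∃ lam : Fin n → ℝ, (∀ i, 0 ≤ lam i) ∧ (∀ i ∈ τ, lam i = 0) ∧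
    x = fun i => w i + lam i}

/-- `row(A)` meets `C_τ = w^(τ) + pos(e_i : i ∉ τ)` in at most one point; the
intersection is nonempty iff `Aᵀ(A_τᵀ)⁻¹ w^(τ)_τ ≥ w^(τ)` entrywise, in which case the unique
intersection point is `q̂ = Aᵀ(A_τᵀ)⁻¹ w^(τ)_τ`. -/
theorem rowSpan_inter_cone {k n : ℕ} (A : Matrix (Fin k) (Fin n) ℝ)
    (hint : ∀ i j, ∃ z : ℤ, A i j = (z : ℝ))
    (hones : (fun _ => (1 : ℝ)) ∈ rowSpan A)
    (τ : Finset (Fin n)) (hcard : τ.card = k)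
    (hdet : (Asub A τ hcard).det ≠ 0)
    (w : Fin n → ℝ) :
    (rowSpan A ∩ coneC τ w).Subsingleton ∧
    ((rowSpan A ∩ coneC τ w).Nonempty ↔ ∀ i, w i ≤ qhat A τ hcard w i) ∧
    ((∀ i, w i ≤ qhat A τ hcard w i) → rowSpan A ∩ coneC τ w = {qhat A τ hcard w}) := by
  classical
  set B := (Asub A τ hcard).transpose with hBdef
  have hBdet : IsUnit B.det := by
    rw [hBdef, Matrix.det_transpose]; exact Ne.isUnit hdet
  set wτ : Fin k → ℝ := fun s => w ((τ.orderIsoOfFin hcard s : Fin n)) with hwτ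
  set v : Fin k → ℝ := B⁻¹.mulVec wτ with hv
  have hBv : B.mulVec v = wτ := by
    rw [hv, Matrix.mulVec_mulVec, Matrix.mul_nonsing_inv _ hBdet, Matrix.one_mulVec]
  have hqdef : ∀ j, qhat A τ hcard w j = ∑ r, A r j * v r := fun j => rfl
  have hq_tau : ∀ s : Fin k, qhat A τ hcard w ((τ.orderIsoOfFin hcard s : Fin n)) = wτ s := by
    intro s
    have h1 : qhat A τ hcard w ((τ.orderIsoOfFin hcard s : Fin n)) = B.mulVec v s := by
      rw [hqdef]
      simp [Matrix.mulVec, dotProduct, hBdef, Asub, Matrix.transpose_apply]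
    rw [h1, hBv]
  have hq_row : qhat A τ hcard w ∈ rowSpan A := ⟨v, by funext j; rw [hqdef]; exact Finset.sum_congr rfl fun i _ => mul_comm _ _⟩
  have hkey : ∀ x ∈ rowSpan A ∩ coneC τ w, x = qhat A τ hcard w := by
    rintro x ⟨⟨y, rfl⟩, lam, hlam0, hlamτ, hx⟩
    have hBy : B.mulVec y = wτ := by
      funext s
      have hmem : ((τ.orderIsoOfFin hcard s : Fin n)) ∈ τ := (τ.orderIsoOfFin hcard s).2
      have h2 := congrFun hx ((τ.orderIsoOfFin hcard s : Fin n))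
      rw [hlamτ _ hmem, add_zero] at h2
      have h3 : B.mulVec y s = ∑ i, y i * A i ((τ.orderIsoOfFin hcard s : Fin n)) := by
        simp [Matrix.mulVec, dotProduct, hBdef, Asub, Matrix.transpose_apply, mul_comm]
      rw [h3, h2]
    have hyv : y = v := by
      have : B⁻¹.mulVec (B.mulVec y) = v := by rw [hBy, hv]
      rwa [Matrix.mulVec_mulVec, Matrix.nonsing_inv_mul _ hBdet, Matrix.one_mulVec] at this
    funext j
    rw [hqdef]
    subst hyv
    exact Finset.sum_congr rfl fun i _ => mul_comm _ _
  refine ⟨fun x hx y hy => by rw [hkey x hx, hkey y hy], ?_, ?_⟩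
  · constructor
    · rintro ⟨x, hx⟩
      have hxq := hkey x hx
      obtain ⟨-, lam, hlam0, -, hxw⟩ := hx
      intro i
      have h4 := congrFun hxw i
      rw [hxq] at h4
      linarith [hlam0 i, h4]
    · intro hge
      refine ⟨qhat A τ hcard w, hq_row, fun i => qhat A τ hcard w i - w i,
        fun i => by simp only; linarith [hge i], ?_, by funext i; ring⟩
      intro i hi
      obtain ⟨s, hs⟩ := (τ.orderIsoOfFin hcard).surjective ⟨i, hi⟩
      have heq : (τ.orderIsoOfFin hcard s : Fin n) = i := by rw [hs]
      simp only
      rw [← heq, hq_tau s, hwτ]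
      ring
  · intro hge
    apply Set.eq_singleton_iff_unique_mem.mpr
    refine ⟨⟨hq_row, fun i => qhat A τ hcard w i - w i, fun i => by simp only; linarith [hge i], ?_, by funext i; ring⟩, fun x hx => hkey x hx⟩
    intro i hi
    obtain ⟨s, hs⟩ := (τ.orderIsoOfFin hcard).surjective ⟨i, hi⟩
    have heq : (τ.orderIsoOfFin hcard s : Fin n) = i := by rw [hs]
    simp only
    rw [← heq, hq_tau s, hwτ]
    ring
end

section
/- Let A ∈ ℤ^{k×n} with (1,…,1) ∈ row(A), O ⊆ [n] a face of Q_A, and τ ⊇ O a basis of M(A) lying in a cell of a regular triangulation refining Δ_{e_O}. Then for every i ∈ [n] \ τ, the entries of the matrix Aᵀ(A_τᵀ)^{-1} satisfy Σ_{j∈τ\O} (Aᵀ(A_τᵀ)^{-1})_{ij} ≥ 1. Consequently, with J₊ = {j ∈ τ\O : (Aᵀ(A_τᵀ)^{-1})_{ij} > 0} and J₋ = (τ\O)\J₊, the constant c(i) = (Σ_{j∈J₊}(Aᵀ(A_τᵀ)^{-1})_{ij}) / (1 − Σ_{j∈J₋}(Aᵀ(A_τᵀ)^{-1})_{ij}) satisfies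 c(i) ≥ 1. -/
/-- The `(i,j)` entry of `Aᵀ(A_τᵀ)⁻¹` (columns indexed by the elements `j ∈ τ`). -/
noncomputable def coeff {k n : ℕ} (A : Matrix (Fin k) (Fin n) ℝ) (τ : Finset (Fin n))
    (h : τ.card = k) (i j : Fin n) : ℝ :=
  ∑ r, A r i * ((Asub A τ h).transpose⁻¹.mulVec
    (fun s => if ((τ.orderIsoOfFin h s : Fin n)) = j then 1 else 0)) r

/-- `σ` is a cell of the regular subdivision `Δ_ω` of `Q_A`. -/
def IsCell {k n : ℕ} (A : Matrix (Fin k) (Fin n) ℝ) (ω : Fin n → ℝ)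
    (σ : Finset (Fin n)) : Prop :=
  ∃ c : Fin k → ℝ, ∀ i : Fin n,
    (∑ r, c r * A r i ≤ ω i) ∧ (∑ r, c r * A r i = ω i ↔ i ∈ σ)

/-- `τ` lies in a cell of the regular subdivision `Δ_ω`. -/
def InCell {k n : ℕ} (A : Matrix (Fin k) (Fin n) ℝ) (ω : Fin n → ℝ)
    (τ : Finset (Fin n)) : Prop :=
  ∃ σ : Finset (Fin n), τ ⊆ σ ∧ IsCell A ω σ

/-- The 0/1 indicator vector of `O ⊆ [n]`. -/
def indic {n : ℕ} (O : Finset (Fin n)) : Fin n → ℝ := fun i => if i ∈ O then 1 else 0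

/-- `O` is a face of `Q_A`. -/
def IsFace {k n : ℕ} (A : Matrix (Fin k) (Fin n) ℝ) (O : Finset (Fin n)) : Prop :=
  ∃ (ψ : Fin k → ℝ) (c : ℝ), ∀ i : Fin n,
    (∑ r, ψ r * A r i ≤ c) ∧ (∑ r, ψ r * A r i = c ↔ i ∈ O)

lemma sum_tau {k n : ℕ} (τ : Finset (Fin n)) (h : τ.card = k) (f : Fin n → ℝ) :
    ∑ j ∈ τ, f j = ∑ s : Fin k, f (τ.orderIsoOfFin h s) := by
  rw [← Finset.sum_attach τ f]
  exact Fintype.sum_equiv (τ.orderIsoOfFin h).toEquiv _ _ (fun s => rfl) |>.symm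

lemma coeff_eq {k n : ℕ} (A : Matrix (Fin k) (Fin n) ℝ) (τ : Finset (Fin n))
    (h : τ.card = k) (i : Fin n) (s : Fin k) :
    coeff A τ h i (τ.orderIsoOfFin h s) = ∑ r, A r i * (Asub A τ h).transpose⁻¹ r s := by
  unfold coeff
  congr 1
  ext r
  congr 1
  have heq : (fun s' => if ((τ.orderIsoOfFin h s' : Fin n)) = τ.orderIsoOfFin h s then (1:ℝ) else 0)
      = Pi.single s 1 := by
    ext s'
    rw [Pi.single_apply]
    congr 1
    simp [Subtype.coe_inj]
  rw [heq, Matrix.mulVec_single]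
  simp

lemma col_expand {k n : ℕ} (A : Matrix (Fin k) (Fin n) ℝ) (τ : Finset (Fin n))
    (h : τ.card = k) (hdet : (Asub A τ h).det ≠ 0) (i : Fin n) (r : Fin k) :
    A r i = ∑ s, Asub A τ h r s * coeff A τ h i (τ.orderIsoOfFin h s) := by
  set B := Asub A τ h with hB
  have hM : ∀ r' s, B.transpose⁻¹ r' s = B⁻¹ s r' := by
    intro r' s
    rw [← Matrix.transpose_nonsing_inv]
    rfl
  calc A r i = ∑ r', A r' i * (1 : Matrix (Fin k) (Fin k) ℝ) r r' := by
        simp [Matrix.one_apply]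
    _ = ∑ r', A r' i * ∑ s, B r s * B⁻¹ s r' := by
        rw [← Matrix.mul_nonsing_inv B (isUnit_iff_ne_zero.mpr hdet)]
        rfl
    _ = ∑ s, B r s * ∑ r', A r' i * B.transpose⁻¹ r' s := by
        simp_rw [Finset.mul_sum]
        rw [Finset.sum_comm]
        apply Finset.sum_congr rfl
        intro s _
        apply Finset.sum_congr rfl
        intro r' _
        rw [hM]
        ring
    _ = ∑ s, B r s * coeff A τ h i (τ.orderIsoOfFin h s) := by
        simp_rw [coeff_eq]
        rfl

lemma funct_expand {k n : ℕ} (A : Matrix (Fin k) (Fin n) ℝ) (τ : Finset (Fin n))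
    (h : τ.card = k) (hdet : (Asub A τ h).det ≠ 0) (c : Fin k → ℝ) (i : Fin n) :
    ∑ r, c r * A r i = ∑ j ∈ τ, coeff A τ h i j * (∑ r, c r * A r j) := by
  rw [sum_tau τ h]
  calc ∑ r, c r * A r i
      = ∑ r, c r * ∑ s, Asub A τ h r s * coeff A τ h i (τ.orderIsoOfFin h s) := by
        simp_rw [← col_expand A τ h hdet]
    _ = ∑ s, coeff A τ h i (τ.orderIsoOfFin h s) * ∑ r, c r * A r (τ.orderIsoOfFin h s) := by
        simp_rw [Finset.mul_sum]
        rw [Finset.sum_comm]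
        apply Finset.sum_congr rfl
        intro s _
        apply Finset.sum_congr rfl
        intro r _
        show c r * (Asub A τ h r s * _) = _
        have : Asub A τ h r s = A r (τ.orderIsoOfFin h s) := rfl
        rw [this]; ring

/-- if `O` is a face of `Q_A` and `τ ⊇ O` is a basis of `M(A)` lying in a cell
of a regular triangulation refining `Δ_{e_O}`, then for every `i ∉ τ` the entries of
`Aᵀ(A_τᵀ)⁻¹` satisfy `Σ_{j ∈ τ\O} (Aᵀ(A_τᵀ)⁻¹)_{ij} ≥ 1`, and the constant
`c(i) = (Σ_{j ∈ J₊})/(1 − Σ_{j ∈ J₋})` satisfies `c(i) ≥ 1`. -/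
theorem c_constant_ge_one {k n : ℕ} (A : Matrix (Fin k) (Fin n) ℝ)
    (hint : ∀ i j, ∃ z : ℤ, A i j = (z : ℝ))
    (hones : ∃ y : Fin k → ℝ, ∀ j, ∑ i, y i * A i j = 1)
    (O τ : Finset (Fin n)) (hface : IsFace A O) (hOτ : O ⊆ τ)
    (hcard : τ.card = k) (hdet : (Asub A τ hcard).det ≠ 0)
    (htri : ∃ v : Fin n → ℝ,
      (∀ σ, IsCell A v σ → σ.card ≤ k) ∧
      (∀ σ, IsCell A v σ → InCell A (indic O) σ) ∧
      InCell A v τ) :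
    ∀ i ∉ τ,
      (1 ≤ ∑ j ∈ τ \ O, coeff A τ hcard i j) ∧
      (1 ≤ (∑ j ∈ τ \ O, if 0 < coeff A τ hcard i j then coeff A τ hcard i j else 0) /
        (1 - ∑ j ∈ τ \ O, if 0 < coeff A τ hcard i j then 0 else coeff A τ hcard i j)) := by
  obtain ⟨v, _, hrefine, σ, hτσ, hcellv⟩ := htri
  obtain ⟨σ', hσσ', c, hc⟩ := hrefine σ hcellv
  obtain ⟨y, hy⟩ := hones
  intro i hiτ
  have hiO : i ∉ O := fun hm => hiτ (hOτ hm)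
  -- all-ones functional: sum of coefficients over τ is 1
  have hsum1 : ∑ j ∈ τ, coeff A τ hcard i j = 1 := by
    have h1 := funct_expand A τ hcard hdet y i
    rw [hy i] at h1
    simp_rw [hy, mul_one] at h1
    exact h1.symm
  -- cell certificate: sum over O is ≤ 0
  have hτσ' : τ ⊆ σ' := hτσ.trans hσσ'
  have hcval : ∀ j ∈ τ, ∑ r, c r * A r j = indic O j := fun j hj =>
    ((hc j).2).mpr (hτσ' hj)
  have hsumO : ∑ j ∈ O, coeff A τ hcard i j ≤ 0 := by
    have h2 := funct_expand A τ hcard hdet c i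
    have h3 : ∑ j ∈ τ, coeff A τ hcard i j * (∑ r, c r * A r j)
        = ∑ j ∈ O, coeff A τ hcard i j := by
      rw [← Finset.sum_sdiff hOτ]
      have hz : ∑ j ∈ τ \ O, coeff A τ hcard i j * (∑ r, c r * A r j) = 0 := by
        apply Finset.sum_eq_zero
        intro j hj
        rw [hcval j (Finset.mem_sdiff.mp hj).1]
        simp [indic, (Finset.mem_sdiff.mp hj).2]
      have ho : ∑ j ∈ O, coeff A τ hcard i j * (∑ r, c r * A r j)
          = ∑ j ∈ O, coeff A τ hcard i j := by
        apply Finset.sum_congr rfl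
        intro j hj
        rw [hcval j (hOτ hj)]
        simp [indic, hj]
      rw [hz, ho, zero_add]
    have h4 : ∑ r, c r * A r i ≤ 0 := by
      have := (hc i).1
      simpa [indic, hiO] using this
    rw [h2, h3] at h4
    exact h4
  have hkey : 1 ≤ ∑ j ∈ τ \ O, coeff A τ hcard i j := by
    have := Finset.sum_sdiff hOτ (f := coeff A τ hcard i)
    rw [hsum1] at this
    linarith
  refine ⟨hkey, ?_⟩
  set Sp := ∑ j ∈ τ \ O, if 0 < coeff A τ hcard i j then coeff A τ hcard i j else 0 with hSp
  set Sm := ∑ j ∈ τ \ O, if 0 < coeff A τ hcard i j then 0 else coeff A τ hcard i j with hSm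
  have hsplit : Sp + Sm = ∑ j ∈ τ \ O, coeff A τ hcard i j := by
    rw [hSp, hSm, ← Finset.sum_add_distrib]
    apply Finset.sum_congr rfl
    intro j _
    by_cases hj : 0 < coeff A τ hcard i j <;> simp [hj]
  have hSmle : Sm ≤ 0 := by
    apply Finset.sum_nonpos
    intro j _
    by_cases hj : 0 < coeff A τ hcard i j <;> simp [hj]
    linarith
  have hpos : 0 < 1 - Sm := by linarith
  rw [le_div_iff₀ hpos, one_mul]
  linarith
end

section
/- Let M be a matroid on [n], σ a basis of the dual matroid M* (so τ = [n]\σ is a basis of M), and π a function on certain subsets defined via w ∈ ℝⁿ by π_{σ+j} = min{w_i : i ∈ σ+j such that (σ+j)\{i} ∈ M*} for j ∈ τ. Suppose γ = σ + j' + k' − i is a set with |σ\γ| = 1 obtained by exchanging i ∈ σ for j',k' ∈ τ∪{n+1}, and that γ corresponds to a basis of the free coextension. Then π_{σ+j'} + π_{σ+k'} − π_γ ≤ max{π_{σ+j} : j ∈ τ such that σ+j−i ∈ M*}, where π_γ = min{w_z : z ∈ γ, γ\{z} ∈ M*} and π of sets containing n+1 is 0. -/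
/-- `π_δ = min { w_z : z ∈ δ, δ \ {z} is a basis of M* }` for a set `δ ⊆ [n]` (a basis of
the free coextension of `M*` not containing the extra element `n+1`). -/
noncomputable def piSet {n : ℕ} (Bs : Finset (Fin n) → Prop) (w : Fin n → ℝ)
    (δ : Finset (Fin n)) : ℝ :=
  sInf {r | ∃ z ∈ δ, Bs (δ.erase z) ∧ r = w z}

/-- `π_{σ+j'}` where `j' ∈ τ ∪ {n+1}` is encoded as `Option (Fin n)` (`none` = the extra
element `n+1`, whose π-value is `0`). -/
noncomputable def piOpt {n : ℕ} (Bs : Finset (Fin n) → Prop) (w : Fin n → ℝ)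
    (σ : Finset (Fin n)) : Option (Fin n) → ℝ
  | none => 0
  | some j => piSet Bs w (insert j σ)

/-- `π_γ` for `γ = σ + j' + k' − i`: if either of `j', k'` is the extra element `n+1`
then `π_γ = 0`; otherwise the usual minimum. -/
noncomputable def piGamma {n : ℕ} (Bs : Finset (Fin n) → Prop) (w : Fin n → ℝ)
    (σ : Finset (Fin n)) (i : Fin n) : Option (Fin n) → Option (Fin n) → ℝ
  | some a, some b => piSet Bs w ((insert a (insert b σ)).erase i)
  | _, _ => 0

/-- `γ = σ + j' + k' − i` is a basis of the free coextension of `M*`. -/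
def coextBasisGamma {n : ℕ} (Bs : Finset (Fin n) → Prop) (σ : Finset (Fin n))
    (i : Fin n) : Option (Fin n) → Option (Fin n) → Prop
  | some a, some b =>
      ∃ z ∈ (insert a (insert b σ)).erase i, Bs (((insert a (insert b σ)).erase i).erase z)
  | some a, none => Bs ((insert a σ).erase i)
  | none, some b => Bs ((insert b σ).erase i)
  | none, none => False

private lemma piSet_le {n : ℕ} (Bs : Finset (Fin n) → Prop) (w : Fin n → ℝ)
    {δ : Finset (Fin n)} {z : Fin n} (hz : z ∈ δ) (hB : Bs (δ.erase z)) :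
    piSet Bs w δ ≤ w z := by
  apply csInf_le
  · apply Set.Finite.bddBelow
    apply Set.Finite.subset (Set.finite_range w)
    rintro r ⟨z, _, _, rfl⟩; exact ⟨z, rfl⟩
  · exact ⟨z, hz, hB, rfl⟩

private lemma piSet_attained {n : ℕ} (Bs : Finset (Fin n) → Prop) (w : Fin n → ℝ)
    {δ : Finset (Fin n)} (h : ∃ z ∈ δ, Bs (δ.erase z)) :
    ∃ z ∈ δ, Bs (δ.erase z) ∧ piSet Bs w δ = w z := by
  have hfin : {r | ∃ z ∈ δ, Bs (δ.erase z) ∧ r = w z}.Finite := by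
    apply Set.Finite.subset (Set.finite_range w)
    rintro r ⟨z, _, _, rfl⟩; exact ⟨z, rfl⟩
  have hne : {r | ∃ z ∈ δ, Bs (δ.erase z) ∧ r = w z}.Nonempty := by
    obtain ⟨z, hz, hB⟩ := h; exact ⟨w z, z, hz, hB, rfl⟩
  obtain ⟨z, hz, hB, heq⟩ := hne.csInf_mem hfin
  exact ⟨z, hz, hB, heq⟩

/-- if `σ+j-i` is a basis then `π_{σ+j}` is at most the sup. -/
private lemma le_sSup_S {n : ℕ} (Bs : Finset (Fin n) → Prop) (w : Fin n → ℝ)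
    (σ : Finset (Fin n)) (i : Fin n) {j : Fin n} (hj : j ∉ σ)
    (hB : Bs (insert j (σ.erase i))) :
    piSet Bs w (insert j σ) ≤
      sSup {r | ∃ j, j ∉ σ ∧ Bs (insert j (σ.erase i)) ∧ r = piSet Bs w (insert j σ)} := by
  apply le_csSup
  · apply Set.Finite.bddAbove
    apply Set.Finite.subset (Set.finite_range (fun j => piSet Bs w (insert j σ)))
    rintro r ⟨j, _, _, rfl⟩; exact ⟨j, rfl⟩
  · exact ⟨j, hj, hB, rfl⟩

/-- `π_{σ+a} ≤ w z` if `σ+a-z` is a basis, `z ∈ σ`, `a ∉ σ`. -/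
private lemma piSet_insert_le {n : ℕ} (Bs : Finset (Fin n) → Prop) (w : Fin n → ℝ)
    {σ : Finset (Fin n)} {a z : Fin n} (ha : a ∉ σ) (hz : z ∈ σ)
    (hB : Bs (insert a (σ.erase z))) : piSet Bs w (insert a σ) ≤ w z := by
  apply piSet_le Bs w (Finset.mem_insert_of_mem hz)
  rwa [Finset.erase_insert_of_ne (Ne.symm (ne_of_mem_of_not_mem hz ha))]

/-- The main case: `z₀ ∈ σ \ {i}` attains `π_γ`, and (wlog) `σ+a-z₀` is a basis. -/
private lemma aux_case {n : ℕ} {Bs : Finset (Fin n) → Prop} (w : Fin n → ℝ)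
    (hexch : ∀ τ₁ τ₂, Bs τ₁ → Bs τ₂ → ∀ i₁ ∈ τ₁, i₁ ∉ τ₂ →
      ∃ i₂ ∈ τ₂, i₂ ∉ τ₁ ∧ Bs (insert i₂ (τ₁.erase i₁)))
    {σ : Finset (Fin n)} (hσ : Bs σ) {i z₀ a b : Fin n}
    (hi : i ∈ σ) (hz : z₀ ∈ σ) (hzi : z₀ ≠ i) (ha : a ∉ σ) (hb : b ∉ σ) (hab : a ≠ b)
    (hB : Bs (insert a (insert b ((σ.erase i).erase z₀))))
    (hpa : Bs (insert a (σ.erase z₀))) :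
    piSet Bs w (insert a σ) + piSet Bs w (insert b σ) - w z₀ ≤
      sSup {r | ∃ j, j ∉ σ ∧ Bs (insert j (σ.erase i)) ∧ r = piSet Bs w (insert j σ)} := by
  set σ₂ := (σ.erase i).erase z₀ with hσ₂
  have hσ₂sub : σ₂ ⊆ σ := (Finset.erase_subset _ _).trans (Finset.erase_subset _ _)
  set B := insert a (insert b σ₂) with hBdef
  have haB : a ∉ insert b σ₂ := by
    simp only [Finset.mem_insert]
    rintro (rfl | h); exact hab rfl; exact ha (hσ₂sub h)
  have h1 : piSet Bs w (insert a σ) ≤ w z₀ := piSet_insert_le Bs w ha hz hpa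
  -- exchange a out of B against σ
  obtain ⟨i₂, hi₂σ, hi₂B, hBi₂⟩ := hexch B σ hB hσ a (Finset.mem_insert_self _ _) ha
  have hBea : B.erase a = insert b σ₂ := Finset.erase_insert haB
  have hi₂cases : i₂ = i ∨ i₂ = z₀ := by
    by_contra hcon
    push_neg at hcon
    exact hi₂B (by
      simp only [hBdef, Finset.mem_insert, hσ₂, Finset.mem_erase]
      exact Or.inr (Or.inr ⟨hcon.2, hcon.1, hi₂σ⟩))
  have hiz : insert i σ₂ = σ.erase z₀ := by
    rw [hσ₂, Finset.erase_right_comm, Finset.insert_erase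
      (Finset.mem_erase.mpr ⟨fun h => hzi h.symm, hi⟩)]
  have hzz : insert z₀ σ₂ = σ.erase i := by
    rw [hσ₂, Finset.insert_erase (Finset.mem_erase.mpr ⟨hzi, hz⟩)]
  rcases hi₂cases with h | h
  · -- i₂ = i : Bs (σ + b - z₀), so π_{σ+b} ≤ w z₀
    rw [h, hBea, Finset.insert_comm, hiz] at hBi₂
    have h2 : piSet Bs w (insert b σ) ≤ w z₀ := piSet_insert_le Bs w hb hz hBi₂
    -- exchange i out of σ against B
    have hiB : i ∉ B := by
      simp only [hBdef, Finset.mem_insert, hσ₂, Finset.mem_erase]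
      rintro (rfl | rfl | ⟨_, h, _⟩)
      · exact ha hi
      · exact hb hi
      · exact h rfl
    obtain ⟨q, hqB, hqσ, hq⟩ := hexch σ B hσ hB i hi hiB
    have hqcases : q = a ∨ q = b := by
      rcases Finset.mem_insert.mp hqB with h | h
      · exact Or.inl h
      rcases Finset.mem_insert.mp h with h | h
      · exact Or.inr h
      · exact absurd (hσ₂sub h) hqσ
    rcases hqcases with rfl | rfl
    · have := le_sSup_S Bs w σ i ha hq
      linarith
    · have := le_sSup_S Bs w σ i hb hq
      linarith
  · -- i₂ = z₀ : Bs (σ + b - i), so π_{σ+b} ≤ sSup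
    rw [h, hBea, Finset.insert_comm, hzz] at hBi₂
    have h2 := le_sSup_S Bs w σ i hb hBi₂
    linarith

/-- the key inequality
`π_{σ+j'} + π_{σ+k'} − π_γ ≤ max { π_{σ+j} : j ∈ τ, σ+j−i ∈ M* }`
for `γ = σ + j' + k' − i` a basis of the free coextension, where `Bs` is the basis predicate
of the dual matroid `M*`, `σ` is a basis of `M*`, `i ∈ σ`, and `j', k' ∈ τ ∪ {n+1}`
(encoded via `Option`, `none` = `n+1`; π of sets containing `n+1` is `0`). -/
theorem key_pi_inequality {n : ℕ} (Bs : Finset (Fin n) → Prop) (w : Fin n → ℝ)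
    (hexch : ∀ τ₁ τ₂, Bs τ₁ → Bs τ₂ → ∀ i₁ ∈ τ₁, i₁ ∉ τ₂ →
      ∃ i₂ ∈ τ₂, i₂ ∉ τ₁ ∧ Bs (insert i₂ (τ₁.erase i₁)))
    (σ : Finset (Fin n)) (hσ : Bs σ) (i : Fin n) (hi : i ∈ σ)
    (j' k' : Option (Fin n)) (hne : j' ≠ k')
    (hj' : ∀ a, j' = some a → a ∉ σ) (hk' : ∀ b, k' = some b → b ∉ σ)
    (hγ : coextBasisGamma Bs σ i j' k') :
    piOpt Bs w σ j' + piOpt Bs w σ k' - piGamma Bs w σ i j' k' ≤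
      sSup {r | ∃ j, j ∉ σ ∧ Bs (insert j (σ.erase i)) ∧ r = piSet Bs w (insert j σ)} := by
  match j', k' with
  | none, none => exact absurd hγ id
  | none, some b =>
    have hb : b ∉ σ := hk' b rfl
    have hbi : b ≠ i := fun h => hb (h ▸ hi)
    simp only [piOpt, piGamma, zero_add, sub_zero]
    rw [coextBasisGamma, Finset.erase_insert_of_ne hbi] at hγ
    exact le_sSup_S Bs w σ i hb hγ
  | some a, none =>
    have ha : a ∉ σ := hj' a rfl
    have hai : a ≠ i := fun h => ha (h ▸ hi)
    simp only [piOpt, piGamma, add_zero, sub_zero]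
    rw [coextBasisGamma, Finset.erase_insert_of_ne hai] at hγ
    exact le_sSup_S Bs w σ i ha hγ
  | some a, some b =>
    have ha : a ∉ σ := hj' a rfl
    have hb : b ∉ σ := hk' b rfl
    have hab : a ≠ b := fun h => hne (by rw [h])
    have hai : a ≠ i := fun h => ha (h ▸ hi)
    have hbi : b ≠ i := fun h => hb (h ▸ hi)
    simp only [piOpt, piGamma]
    rw [coextBasisGamma] at hγ
    have hγform : (insert a (insert b σ)).erase i = insert a (insert b (σ.erase i)) := by
      rw [Finset.erase_insert_of_ne hai, Finset.erase_insert_of_ne hbi]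
    obtain ⟨z₀, hz₀mem, hz₀B, hz₀eq⟩ := piSet_attained Bs w hγ
    rw [hz₀eq]
    rw [hγform] at hz₀mem hz₀B
    rcases Finset.mem_insert.mp hz₀mem with rfl | hz₀mem'
    · -- z₀ = a
      rw [Finset.erase_insert (by
        simp only [Finset.mem_insert, Finset.mem_erase]
        rintro (rfl | ⟨_, h⟩); exact hab rfl; exact ha h)] at hz₀B
      have h1 : piSet Bs w (insert z₀ σ) ≤ w z₀ :=
        piSet_le Bs w (Finset.mem_insert_self _ _) (by rwa [Finset.erase_insert ha])
      have h2 := le_sSup_S Bs w σ i hb hz₀B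
      linarith
    rcases Finset.mem_insert.mp hz₀mem' with rfl | hz₀σ
    · -- z₀ = b
      rw [Finset.insert_comm, Finset.erase_insert (by
        simp only [Finset.mem_insert, Finset.mem_erase]
        rintro (rfl | ⟨_, h⟩); exact hab rfl; exact hb h)] at hz₀B
      have h1 : piSet Bs w (insert z₀ σ) ≤ w z₀ :=
        piSet_le Bs w (Finset.mem_insert_self _ _) (by rwa [Finset.erase_insert hb])
      have h2 := le_sSup_S Bs w σ i ha hz₀B
      linarith
    · -- z₀ ∈ σ.erase i
      obtain ⟨hzi, hz⟩ := Finset.mem_erase.mp hz₀σ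
      have hza : z₀ ≠ a := fun h => ha (h ▸ hz)
      have hzb : z₀ ≠ b := fun h => hb (h ▸ hz)
      have hBform : (insert a (insert b (σ.erase i))).erase z₀ =
          insert a (insert b ((σ.erase i).erase z₀)) := by
        rw [Finset.erase_insert_of_ne (fun h => hza h.symm),
          Finset.erase_insert_of_ne (fun h => hzb h.symm)]
      rw [hBform] at hz₀B
      -- exchange z₀ out of σ against B
      have hz₀B' : z₀ ∉ insert a (insert b ((σ.erase i).erase z₀)) := by
        simp only [Finset.mem_insert, Finset.mem_erase]
        rintro (h | h | ⟨h, _⟩)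
        · exact hza h
        · exact hzb h
        · exact h rfl
      obtain ⟨p, hpB, hpσ, hp⟩ := hexch σ _ hσ hz₀B z₀ hz hz₀B'
      have hpcases : p = a ∨ p = b := by
        rcases Finset.mem_insert.mp hpB with h | h
        · exact Or.inl h
        rcases Finset.mem_insert.mp h with h | h
        · exact Or.inr h
        · exact absurd (Finset.mem_of_mem_erase (Finset.mem_of_mem_erase h)) hpσ
      rcases hpcases with rfl | rfl
      · exact aux_case w hexch hσ hi hz hzi ha hb hab hz₀B hp
      · have := aux_case w hexch hσ hi hz hzi hb ha (Ne.symm hab)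
          (by rwa [Finset.insert_comm]) hp
        linarith
end

section
/- Let M be a matroid on [n] without coloops in its dual role (i.e., the dual M* has no coloops), σ a basis of M*, τ = [n]\σ, and w ∈ ℝⁿ. Define w^(τ)_j = π_{σ+j} for j ∈ τ and w^(τ)_i = max{π_{σ+j} : j ∈ τ, σ+j−i ∈ M*} for i ∈ σ, where π_{σ+j} = min{w_l : l ∈ σ+j, (σ+j)\{l} ∈ M*}. Then this definition agrees with the τ-operator applied to w in the matroid M: that is, π_{σ+j} = min{w_j, w_i : i ∈ σ such that (τ\{j})∪{i} ∈ M} for every j ∈ τ. -/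
lemma compl_erase_insert {n : ℕ} (σ : Finset (Fin n)) {i j : Fin n}
    (hi : i ∈ σ) (hj : j ∉ σ) :
    ((insert j σ).erase i)ᶜ = insert i ((σᶜ : Finset (Fin n)).erase j) := by
  ext a
  simp only [Finset.mem_compl, Finset.mem_erase, Finset.mem_insert]
  constructor
  · intro h
    by_cases hai : a = i
    · exact Or.inl hai
    · push_neg at h
      rcases h hai with ⟨h1, h2⟩
      exact Or.inr ⟨h1, h2⟩
  · rintro (rfl | ⟨h1, h2⟩)
    · intro h
      exact h.1 rfl
    · intro h
      rcases h.2 with rfl | ha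
      · exact h1 rfl
      · exact h2 ha

/-- the Plücker-vector formula for the free coextension agrees with the
τ-operator. If `BM` is the basis predicate of a matroid `M` on `[n]` and `Bs` is that of its
dual `M*` (so `Bs δ ↔ BM δᶜ`), `σ` a basis of `M*` and `τ = [n]\σ`, then for every `j ∈ τ`,
`π_{σ+j} = min { w_j , w_i : i ∈ σ with (τ\{j}) ∪ {i} ∈ M }`. -/
theorem piSet_eq_tauMin {n : ℕ} (BM Bs : Finset (Fin n) → Prop)
    (w : Fin n → ℝ) (hdual : ∀ δ : Finset (Fin n), Bs δ ↔ BM δᶜ)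
    (hexch : ∀ τ₁ τ₂, BM τ₁ → BM τ₂ → ∀ i₁ ∈ τ₁, i₁ ∉ τ₂ →
      ∃ i₂ ∈ τ₂, i₂ ∉ τ₁ ∧ BM (insert i₂ (τ₁.erase i₁)))
    (σ : Finset (Fin n)) (hσ : Bs σ) :
    ∀ j ∈ σᶜ, piSet Bs w (insert j σ) =
      sInf (insert (w j)
        {r | ∃ i ∈ σ, BM (insert i ((σᶜ : Finset (Fin n)).erase j)) ∧ r = w i}) := by
  intro j hj
  have hj' : j ∉ σ := Finset.mem_compl.mp hj
  unfold piSet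
  congr 1
  ext r
  simp only [Set.mem_insert_iff, Set.mem_setOf_eq]
  constructor
  · rintro ⟨z, hz, hB, rfl⟩
    rcases Finset.mem_insert.mp hz with rfl | hzσ
    · exact Or.inl rfl
    · refine Or.inr ⟨z, hzσ, ?_, rfl⟩
      rw [← compl_erase_insert σ hzσ hj', ← hdual]
      exact hB
  · rintro (rfl | ⟨i, hiσ, hB, rfl⟩)
    · refine ⟨j, Finset.mem_insert_self j σ, ?_, rfl⟩
      rwa [Finset.erase_insert hj']
    · refine ⟨i, Finset.mem_insert_of_mem hiσ, ?_, rfl⟩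
      rw [hdual, compl_erase_insert σ hiσ hj']
      exact hB
end
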